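/- arXiv:1609.00115 — 2 statements merged into one kernel-verified Lean document; each statement's English description precedes it below -/
import Mathlib

section
/- Let b > 0, let τ be a real random variable with the Rayleigh distribution of scale b (law given by density τ ↦ (τ/b²)·exp(−τ²/(2b²)) on τ ≥ 0 with respect to Lebesgue measure), let g be a standard Gaussian random variable (mean 0, variance 1), and assume τ and g are independent. Then the product v = τ·g has the Laplace distribution with mean 0 and scale b, i.e., the law of v is the measure on ℝ with density v ↦ (1/(2b))·exp(−|v|/b) with respect to Lebesgue measure. -/
/-!
Given `τ = t > 0`, the product `τ g` is `N(0, t²)`, so `τ g` has the density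
`v ↦ ∫₀^∞ (t / b²) e^{-t²/(2b²)} (2π t²)^{-1/2} e^{-v²/(2t²)} dt`. Since
`a t² + c / t² = (√a t - √c / t)² + 2√(ac)`, the Cauchy–Schlömilch substitution
`u = √a t - √c / t` turns `∫₀^∞ exp (-a t² - c / t²) dt` into a Gaussian integral, equal to
`½ √(π / a) e^{-2√(ac)}`; with `a = 1 / (2b²)` and `c = v² / 2` the density is
`(1 / (2b)) e^{-|v| / b}`.
-/

open Real MeasureTheory ProbabilityTheory Set
open scoped ENNReal NNReal

lemma hasDerivAt_const_div {k t : ℝ} (ht : t ≠ 0) :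
    HasDerivAt (fun t => k / t) (-(k / t ^ 2)) t := by
  simpa only [mul_neg, ← div_eq_mul_inv] using (hasDerivAt_inv ht).const_mul k

lemma image_const_div_Ioi_zero {k : ℝ} (hk : 0 < k) : (fun t => k / t) '' Ioi 0 = Ioi 0 := by
  refine (image_subset_iff.2 fun t (ht : 0 < t) => div_pos hk ht).antisymm fun u (hu : 0 < u) => ?_
  exact ⟨k / u, div_pos hk hu, by field_simp⟩

section CauchySchlomilch

variable {α β : ℝ}

lemma hasDerivAt_mul_sub_div {t : ℝ} (ht : t ≠ 0) :
    HasDerivAt (fun t => α * t - β / t) (α + β / t ^ 2) t := by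
  have h := ((hasDerivAt_id' t).const_mul α).fun_sub ((hasDerivAt_inv ht).const_mul β)
  simpa only [mul_one, mul_neg, sub_neg_eq_add, ← div_eq_mul_inv] using h

lemma strictMonoOn_mul_sub_div (hα : 0 ≤ α) (hβ : 0 < β) :
    StrictMonoOn (fun t => α * t - β / t) (Ioi 0) := by
  intro s (hs : 0 < s) t (ht : 0 < t) hst
  have : β / t < β / s := by gcongr
  have : α * s ≤ α * t := by gcongr
  dsimp only
  linarith

lemma image_mul_sub_div_Ioi (hα : 0 < α) (hβ : 0 < β) :
    (fun t => α * t - β / t) '' Ioi 0 = univ := by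
  refine eq_univ_of_forall fun u => ?_
  set r := √(u ^ 2 + 4 * α * β)
  have hr : r ^ 2 = u ^ 2 + 4 * α * β := sq_sqrt (by positivity)
  have hur : 0 < u + r := by
    nlinarith [sqrt_nonneg (u ^ 2 + 4 * α * β), neg_abs_le u, sq_abs u]
  refine ⟨(u + r) / (2 * α), div_pos hur (by positivity), ?_⟩
  field_simp
  nlinarith

lemma integral_eq_integral_Ioi_mul_sub_div {f : ℝ → ℝ} (hα : 0 < α) (hβ : 0 < β) :
    ∫ u, f u = ∫ t in Ioi 0, (α + β / t ^ 2) * f (α * t - β / t) := by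
  rw [← setIntegral_univ, ← image_mul_sub_div_Ioi hα hβ,
    integral_image_eq_integral_abs_deriv_smul measurableSet_Ioi
      (fun t ht => (hasDerivAt_mul_sub_div ht.ne').hasDerivWithinAt)
      (strictMonoOn_mul_sub_div hα.le hβ).injOn]
  exact setIntegral_congr_fun measurableSet_Ioi fun t _ => by
    rw [abs_of_pos (by positivity), smul_eq_mul]

lemma integrableOn_deriv_mul_comp_mul_sub_div_Ioi {f : ℝ → ℝ} (hf : Integrable f)
    (hα : 0 < α) (hβ : 0 < β) :
    IntegrableOn (fun t => (α + β / t ^ 2) * f (α * t - β / t)) (Ioi 0) := by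
  refine ((integrableOn_image_iff_integrableOn_abs_deriv_smul measurableSet_Ioi
    (fun t ht => (hasDerivAt_mul_sub_div ht.ne').hasDerivWithinAt)
    (strictMonoOn_mul_sub_div hα.le hβ).injOn f).1 ?_).congr_fun
    (fun t _ => by dsimp only; rw [abs_of_pos (by positivity), smul_eq_mul]) measurableSet_Ioi
  rwa [image_mul_sub_div_Ioi hα hβ, integrableOn_univ]

lemma integrableOn_comp_mul_sub_div_Ioi {f : ℝ → ℝ} (hf : Integrable f) (hα : 0 < α)
    (hβ : 0 < β) : IntegrableOn (fun t => f (α * t - β / t)) (Ioi 0) := by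
  have h_le (t : ℝ) : α ≤ α + β / t ^ 2 := le_add_of_nonneg_right (by positivity)
  have h_bdd (t : ℝ) : ‖(α + β / t ^ 2)⁻¹‖ ≤ α⁻¹ := by
    rw [norm_inv, Real.norm_of_nonneg (hα.trans_le (h_le t)).le]
    exact inv_anti₀ hα (h_le t)
  have h_meas : Measurable fun t : ℝ => (α + β / t ^ 2)⁻¹ := by fun_prop
  exact IntegrableOn.congr_fun
    ((integrableOn_deriv_mul_comp_mul_sub_div_Ioi hf hα hβ).bdd_mul h_meas.aestronglyMeasurable
      (ae_of_all _ h_bdd))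
    (fun t _ => inv_mul_cancel_left₀ (hα.trans_le (h_le t)).ne' _) measurableSet_Ioi

theorem integral_comp_mul_sub_div_Ioi {f : ℝ → ℝ} (hf : Integrable f)
    (hf_even : ∀ u, f (-u) = f u) (hα : 0 < α) (hβ : 0 < β) :
    ∫ t in Ioi 0, f (α * t - β / t) = (∫ u, f u) / (2 * α) := by
  set φ := fun t : ℝ => α * t - β / t
  have h_int : IntegrableOn (fun t => f (φ t)) (Ioi 0) :=
    integrableOn_comp_mul_sub_div_Ioi hf hα hβ
  have h_int_div : IntegrableOn (fun t => β / t ^ 2 * f (φ t)) (Ioi 0) :=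
    ((integrableOn_deriv_mul_comp_mul_sub_div_Ioi hf hα hβ).sub (h_int.const_mul α)).congr_fun
      (fun t _ => by simp only [Pi.sub_apply]; ring) measurableSet_Ioi
  -- `t ↦ (β / α) / t` is an involution of `Ioi 0` that turns `φ` into `-φ`
  have h_symm : ∫ t in Ioi 0, f (φ t) = α⁻¹ * ∫ t in Ioi 0, β / t ^ 2 * f (φ t) := by
    have hk : 0 < β / α := div_pos hβ hα
    conv_lhs => rw [← image_const_div_Ioi_zero hk]
    rw [integral_image_eq_integral_abs_deriv_smul measurableSet_Ioi
      (fun t ht => (hasDerivAt_const_div ht.ne').hasDerivWithinAt)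
      (fun s _ t _ hst => by simpa [div_eq_mul_inv, hα.ne', hβ.ne'] using hst)
      (fun t => f (φ t)), ← integral_const_mul]
    refine setIntegral_congr_fun measurableSet_Ioi fun t (ht : 0 < t) => ?_
    have : φ (β / α / t) = -φ t := by simp only [φ]; field_simp; ring
    rw [this, hf_even, abs_neg, abs_of_pos (by positivity), smul_eq_mul]
    field_simp
  rw [integral_eq_integral_Ioi_mul_sub_div hα hβ]
  simp only [add_mul]
  rw [integral_add (h_int.const_mul α) h_int_div, integral_const_mul, h_symm]
  field_simp
  ring

end CauchySchlomilch

theorem integrable_exp_neg_mul_sq_sub_div_sq {a c : ℝ} (ha : 0 < a) (hc : 0 ≤ c) :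
    Integrable fun t : ℝ => exp (-(a * t ^ 2) - c / t ^ 2) := by
  refine (integrable_exp_neg_mul_sq ha).mono' (by fun_prop) (ae_of_all _ fun t => ?_)
  rw [norm_of_nonneg (exp_nonneg _), neg_mul]
  gcongr
  exact sub_le_self _ (by positivity)

theorem integral_exp_neg_mul_sq_sub_div_sq_Ioi {a c : ℝ} (ha : 0 < a) (hc : 0 ≤ c) :
    ∫ t in Ioi 0, exp (-(a * t ^ 2) - c / t ^ 2) = √(π / a) / 2 * exp (-2 * √(a * c)) := by
  rcases hc.eq_or_lt with rfl | hc
  · simpa using integral_gaussian_Ioi a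
  have h_sq : ∀ t : ℝ, t ≠ 0 →
      -(a * t ^ 2) - c / t ^ 2 = -2 * √(a * c) + -(√a * t - √c / t) ^ 2 := fun t ht => by
    rw [sqrt_mul ha.le]
    field_simp
    linear_combination t ^ 4 * sq_sqrt ha.le + sq_sqrt hc.le
  have h_gauss : Integrable fun u : ℝ => exp (-u ^ 2) := by
    simpa using integrable_exp_neg_mul_sq one_pos
  calc ∫ t in Ioi 0, exp (-(a * t ^ 2) - c / t ^ 2)
      = exp (-2 * √(a * c)) * ∫ t in Ioi 0, exp (-(√a * t - √c / t) ^ 2) := by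
        rw [← integral_const_mul]
        refine setIntegral_congr_fun measurableSet_Ioi fun t (ht : 0 < t) => ?_
        rw [h_sq t ht.ne', exp_add]
    _ = exp (-2 * √(a * c)) * (√π / (2 * √a)) := by
        rw [integral_comp_mul_sub_div_Ioi h_gauss (fun u => by rw [neg_sq]) (sqrt_pos.2 ha)
          (sqrt_pos.2 hc), (by simpa using integral_gaussian 1 : ∫ u : ℝ, exp (-u ^ 2) = √π)]
    _ = √(π / a) / 2 * exp (-2 * √(a * c)) := by
        rw [sqrt_div' π ha.le]
        ring

theorem mconv_gaussianReal_eq_withDensity (μ : Measure ℝ) [SFinite μ] (hμ : μ {0} = 0)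
    {v : ℝ≥0} (hv : v ≠ 0) :
    μ ∗ₘ gaussianReal 0 v = volume.withDensity
      fun x => ∫⁻ t, gaussianPDF 0 (NNReal.mk (t ^ 2) (sq_nonneg t) * v) x ∂μ := by
  ext s hs
  have h_mul : Measurable fun p : ℝ × ℝ => p.1 * p.2 := measurable_mul
  have h_pdf : Measurable fun p : ℝ × ℝ =>
      gaussianPDF 0 (NNReal.mk (p.1 ^ 2) (sq_nonneg p.1) * v) p.2 := by
    simp only [gaussianPDF, gaussianPDFReal]
    fun_prop
  rw [Measure.mconv, Measure.map_apply h_mul hs, Measure.prod_apply (h_mul hs),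
    withDensity_apply _ hs, ← lintegral_lintegral_swap h_pdf.aemeasurable]
  refine lintegral_congr_ae ?_
  filter_upwards [measure_eq_zero_iff_ae_notMem.1 hμ] with t (ht : t ≠ 0)
  have h_var : NNReal.mk (t ^ 2) (sq_nonneg t) ≠ 0 := by
    rw [ne_eq, ← NNReal.coe_eq_zero, NNReal.coe_mk]
    positivity
  have h_scale := gaussianReal_map_const_mul (μ := 0) (v := v) t
  rw [mul_zero] at h_scale
  rw [← gaussianReal_apply _ (mul_ne_zero h_var hv), ← h_scale,
    Measure.map_apply (measurable_const_mul t) hs]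
  rfl

noncomputable def rayleighPDFReal (b t : ℝ) : ℝ :=
  if 0 ≤ t then t / b ^ 2 * exp (-t ^ 2 / (2 * b ^ 2)) else 0

noncomputable def laplacePDFReal (b x : ℝ) : ℝ :=
  1 / (2 * b) * exp (-|x| / b)

lemma measurable_rayleighPDFReal (b : ℝ) : Measurable (rayleighPDFReal b) :=
  Measurable.ite measurableSet_Ici (by fun_prop) measurable_const

lemma rayleighPDFReal_of_nonpos {b t : ℝ} (ht : t ≤ 0) : rayleighPDFReal b t = 0 := by
  rcases ht.lt_or_eq with ht | rfl
  · exact if_neg ht.not_ge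
  · simp [rayleighPDFReal]

lemma rayleighPDFReal_mul_gaussianPDFReal {b t : ℝ} (hb : b ≠ 0) (ht : 0 < t) (x : ℝ) :
    rayleighPDFReal b t * gaussianPDFReal 0 (NNReal.mk (t ^ 2) (sq_nonneg t)) x
      = (b ^ 2 * √(2 * π))⁻¹ * exp (-(1 / (2 * b ^ 2) * t ^ 2) - x ^ 2 / 2 / t ^ 2) := by
  have h_exp : exp (-t ^ 2 / (2 * b ^ 2)) * exp (-(x - 0) ^ 2 / (2 * t ^ 2))
      = exp (-(1 / (2 * b ^ 2) * t ^ 2) - x ^ 2 / 2 / t ^ 2) := by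
    rw [← exp_add, sub_zero]
    congr 1
    field_simp
    ring
  rw [rayleighPDFReal, if_pos ht.le, gaussianPDFReal, NNReal.coe_mk,
    sqrt_mul (by positivity), sqrt_sq ht.le, ← h_exp]
  field_simp

lemma lintegral_gaussianPDF_withDensity_rayleighPDFReal {b : ℝ} (hb : 0 < b) (x : ℝ) :
    ∫⁻ t, gaussianPDF 0 (NNReal.mk (t ^ 2) (sq_nonneg t)) x
        ∂volume.withDensity (fun t => ENNReal.ofReal (rayleighPDFReal b t))
      = ENNReal.ofReal (laplacePDFReal b x) := by
  have ha : 0 < 1 / (2 * b ^ 2) := by positivity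
  have hc : 0 ≤ x ^ 2 / 2 := by positivity
  have h_pdf : Measurable fun t : ℝ => gaussianPDF 0 (NNReal.mk (t ^ 2) (sq_nonneg t)) x := by
    simp only [gaussianPDF, gaussianPDFReal]
    fun_prop
  have h_integrand (t : ℝ) :
      ENNReal.ofReal (rayleighPDFReal b t) * gaussianPDF 0 (NNReal.mk (t ^ 2) (sq_nonneg t)) x
        = (Ioi 0).indicator (fun t => ENNReal.ofReal ((b ^ 2 * √(2 * π))⁻¹ *
            exp (-(1 / (2 * b ^ 2) * t ^ 2) - x ^ 2 / 2 / t ^ 2))) t := by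
    by_cases ht : 0 < t
    · have h_nonneg : 0 ≤ rayleighPDFReal b t := by
        rw [rayleighPDFReal, if_pos ht.le]
        positivity
      rw [indicator_of_mem (show t ∈ Ioi 0 from ht), gaussianPDF, ← ENNReal.ofReal_mul h_nonneg,
        rayleighPDFReal_mul_gaussianPDFReal hb.ne' ht]
    · rw [indicator_of_notMem (show t ∉ Ioi 0 from ht), rayleighPDFReal_of_nonpos (not_lt.1 ht),
        ENNReal.ofReal_zero, zero_mul]
  rw [lintegral_withDensity_eq_lintegral_mul _ (measurable_rayleighPDFReal b).ennreal_ofReal h_pdf]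
  simp only [Pi.mul_apply, h_integrand]
  rw [lintegral_indicator measurableSet_Ioi, ← ofReal_integral_eq_lintegral_ofReal
    ((integrable_exp_neg_mul_sq_sub_div_sq ha hc).integrableOn.const_mul _)
    (ae_of_all _ fun t => by positivity), integral_const_mul,
    integral_exp_neg_mul_sq_sub_div_sq_Ioi ha hc]
  have h_sqrt_div : √(π / (1 / (2 * b ^ 2))) = √(2 * π) * b := by
    rw [show π / (1 / (2 * b ^ 2)) = 2 * π * b ^ 2 by field_simp, sqrt_mul (by positivity),
      sqrt_sq hb.le]
  have h_sqrt_mul : √(1 / (2 * b ^ 2) * (x ^ 2 / 2)) = |x| / (2 * b) := by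
    rw [show 1 / (2 * b ^ 2) * (x ^ 2 / 2) = (x / (2 * b)) ^ 2 by field_simp, sqrt_sq_eq_abs,
      abs_div, abs_of_pos (by positivity : 0 < 2 * b)]
  rw [h_sqrt_div, h_sqrt_mul, laplacePDFReal]
  congr 1
  field_simp

/-- If `τ` is Rayleigh-distributed with scale `b > 0`, `g` is a standard Gaussian random
variable, and `τ` and `g` are independent, then `τ · g` has the Laplace distribution with
mean `0` and scale `b`. -/
theorem rayleigh_mul_gaussian_eq_laplace
    {Ω : Type*} [MeasurableSpace Ω] {P : Measure Ω} [IsProbabilityMeasure P]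
    (b : ℝ) (hb : 0 < b) (τ g : Ω → ℝ) (hτ : Measurable τ) (hg : Measurable g)
    (hτ_law : Measure.map τ P = volume.withDensity (fun t =>
      ENNReal.ofReal (if 0 ≤ t then (t / b ^ 2) * Real.exp (-t ^ 2 / (2 * b ^ 2)) else 0)))
    (hg_law : Measure.map g P = gaussianReal 0 1)
    (h_indep : IndepFun τ g P) :
    Measure.map (fun ω => τ ω * g ω) P = volume.withDensity (fun v =>
      ENNReal.ofReal ((1 / (2 * b)) * Real.exp (-|v| / b))) := by
  change P.map τ = volume.withDensity (fun t => ENNReal.ofReal (rayleighPDFReal b t)) at hτ_law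
  have h_null : P.map τ {0} = 0 := by
    rw [hτ_law]
    exact withDensity_absolutelyContinuous _ _ Real.volume_singleton
  calc P.map (fun ω => τ ω * g ω) = P.map τ ∗ₘ gaussianReal 0 1 :=
        hg_law ▸ h_indep.map_mul_eq_map_mconv_map hτ hg
    _ = volume.withDensity fun x =>
          ∫⁻ t, gaussianPDF 0 (NNReal.mk (t ^ 2) (sq_nonneg t)) x ∂(P.map τ) := by
        simpa only [mul_one] using mconv_gaussianReal_eq_withDensity _ h_null one_ne_zero
    _ = volume.withDensity fun x => ENNReal.ofReal (laplacePDFReal b x) := by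
        simp only [hτ_law, lintegral_gaussianPDF_withDensity_rayleighPDFReal hb]
end

section
/- Let Ξ ∈ ℝ^{n×n} be symmetric positive definite, let C ∈ ℝ^{1×n} be a nonzero row vector, let μ ∈ ℝⁿ, y ∈ ℝ, and c > 0. Define f : ℝⁿ → ℝ by f(x) = (1/2)·(x − μ)ᵀ·Ξ⁻¹·(x − μ) + c·|C·x − y|. If C·μ − c·(C·Ξ·Cᵀ) ≤ y ≤ C·μ + c·(C·Ξ·Cᵀ), then x* = μ + ((y − C·μ)/(C·Ξ·Cᵀ))·Ξ·Cᵀ is the unique global minimizer of f, and it satisfies C·x* = y. -/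
open Matrix

/-! With `u = Ξ Cᵀ` and `α = (y − C μ)/(C Ξ Cᵀ)`, the point `x* = μ + α u` satisfies `C x* = y`,
and since `Ξ⁻¹ u = Cᵀ` the gradient of the quadratic part at `x*` is `α C`. Hence for every `d`,
`f (x* + d) = f x* + ½ dᵀ Ξ⁻¹ d + (α (C d) + c |C d|)`. The window on `y` is exactly `|α| ≤ c`,
so the last bracket is nonnegative, while `dᵀ Ξ⁻¹ d > 0` for `d ≠ 0`. -/

theorem mul_add_mul_abs_nonneg {R : Type*} [Ring R] [LinearOrder R] [IsOrderedRing R]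
    {a c : R} (h : |a| ≤ c) (t : R) : 0 ≤ a * t + c * |t| := by
  rw [← neg_le_iff_add_nonneg']
  calc -(a * t) ≤ |a * t| := neg_le_abs _
    _ = |a| * |t| := abs_mul a t
    _ ≤ c * |t| := mul_le_mul_of_nonneg_right h (abs_nonneg t)

namespace Matrix

variable {ι R : Type*} [Fintype ι] [CommRing R]

theorem IsSymm.dotProduct_mulVec_comm {A : Matrix ι ι R} (hA : A.IsSymm) (v w : ι → R) :
    v ⬝ᵥ (A *ᵥ w) = w ⬝ᵥ (A *ᵥ v) := by
  rw [dotProduct_mulVec, ← mulVec_transpose, hA.eq, dotProduct_comm]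

theorem IsSymm.inv_quadForm_smul_mulVec_add [DecidableEq ι] {Ξ : Matrix ι ι R} (hΞ : Ξ.IsSymm)
    (hdet : IsUnit Ξ.det) (C d : ι → R) (α : R) :
    (α • (Ξ *ᵥ C) + d) ⬝ᵥ (Ξ⁻¹ *ᵥ (α • (Ξ *ᵥ C) + d)) =
      α ^ 2 * (C ⬝ᵥ (Ξ *ᵥ C)) + 2 * α * (C ⬝ᵥ d) + d ⬝ᵥ (Ξ⁻¹ *ᵥ d) := by
  have hinv : Ξ⁻¹ *ᵥ (Ξ *ᵥ C) = C := by rw [mulVec_mulVec, nonsing_inv_mul Ξ hdet, one_mulVec]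
  have hcross : (Ξ *ᵥ C) ⬝ᵥ (Ξ⁻¹ *ᵥ d) = C ⬝ᵥ d := by
    rw [hΞ.inv.dotProduct_mulVec_comm, hinv, dotProduct_comm]
  simp only [mulVec_add, mulVec_smul, hinv, dotProduct_add, add_dotProduct, dotProduct_smul,
    smul_dotProduct, hcross, smul_eq_mul]
  rw [dotProduct_comm d C, dotProduct_comm (Ξ *ᵥ C) C]
  ring

end Matrix

noncomputable def mapObjective {ι : Type*} [Fintype ι] [DecidableEq ι] (Ξ : Matrix ι ι ℝ)
    (C μ : ι → ℝ) (y c : ℝ) (x : ι → ℝ) : ℝ :=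
  1 / 2 * ((x - μ) ⬝ᵥ (Ξ⁻¹ *ᵥ (x - μ))) + c * |C ⬝ᵥ x - y|

theorem mapObjective_add {ι : Type*} [Fintype ι] [DecidableEq ι] {Ξ : Matrix ι ι ℝ}
    (hΞ : Ξ.IsSymm) (hdet : IsUnit Ξ.det) {C μ : ι → ℝ} {y α : ℝ}
    (hy : C ⬝ᵥ (μ + α • (Ξ *ᵥ C)) = y) (c : ℝ) (d : ι → ℝ) :
    mapObjective Ξ C μ y c (μ + α • (Ξ *ᵥ C) + d) =
      mapObjective Ξ C μ y c (μ + α • (Ξ *ᵥ C)) +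
        (1 / 2 * (d ⬝ᵥ (Ξ⁻¹ *ᵥ d)) + (α * (C ⬝ᵥ d) + c * |C ⬝ᵥ d|)) := by
  have hquad := hΞ.inv_quadForm_smul_mulVec_add hdet C d α
  have hquad₀ := hΞ.inv_quadForm_smul_mulVec_add hdet C 0 α
  simp only [add_zero, dotProduct_zero, zero_dotProduct] at hquad₀
  have hx : μ + α • (Ξ *ᵥ C) + d - μ = α • (Ξ *ᵥ C) + d := by abel
  have hCd : C ⬝ᵥ (μ + α • (Ξ *ᵥ C) + d) - y = C ⬝ᵥ d := by
    rw [dotProduct_add, hy, add_sub_cancel_left]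
  rw [mapObjective, mapObjective, hx, add_sub_cancel_left, hCd, hy, sub_self, abs_zero, hquad,
    hquad₀]
  ring

theorem map_estimate_middle_regime_general
    {n : ℕ} (Ξ : Matrix (Fin n) (Fin n) ℝ) (hΞ : Ξ.PosDef)
    (C : Fin n → ℝ) (hC : C ≠ 0) (μ : Fin n → ℝ) (y c : ℝ)
    (f : (Fin n → ℝ) → ℝ)
    (hf : ∀ x, f x = (1 / 2) * ((x - μ) ⬝ᵥ (Ξ⁻¹ *ᵥ (x - μ))) + c * |C ⬝ᵥ x - y|)
    (hy₁ : C ⬝ᵥ μ - c * (C ⬝ᵥ (Ξ *ᵥ C)) ≤ y) (hy₂ : y ≤ C ⬝ᵥ μ + c * (C ⬝ᵥ (Ξ *ᵥ C))) :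
    (∀ x : Fin n → ℝ, x ≠ μ + ((y - C ⬝ᵥ μ) / (C ⬝ᵥ (Ξ *ᵥ C))) • (Ξ *ᵥ C) →
      f (μ + ((y - C ⬝ᵥ μ) / (C ⬝ᵥ (Ξ *ᵥ C))) • (Ξ *ᵥ C)) < f x) ∧
    C ⬝ᵥ (μ + ((y - C ⬝ᵥ μ) / (C ⬝ᵥ (Ξ *ᵥ C))) • (Ξ *ᵥ C)) = y := by
  set s := C ⬝ᵥ (Ξ *ᵥ C)
  set α := (y - C ⬝ᵥ μ) / s
  have hs : 0 < s := by simpa using hΞ.dotProduct_mulVec_pos hC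
  have hα : |α| ≤ c := by
    rw [abs_div, abs_of_pos hs, div_le_iff₀ hs, abs_le]
    constructor <;> linarith
  have hCx : C ⬝ᵥ (μ + α • (Ξ *ᵥ C)) = y := by
    rw [dotProduct_add, dotProduct_smul, smul_eq_mul, div_mul_cancel₀ _ hs.ne']
    ring
  refine ⟨fun x hx => ?_, hCx⟩
  obtain ⟨d, hd, rfl⟩ : ∃ d ≠ 0, x = μ + α • (Ξ *ᵥ C) + d :=
    ⟨x - (μ + α • (Ξ *ᵥ C)), sub_ne_zero.mpr hx, by abel⟩
  have hsymm : Ξ.IsSymm := by simpa using hΞ.isHermitian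
  obtain rfl : f = mapObjective Ξ C μ y c := funext hf
  rw [mapObjective_add hsymm hΞ.det_pos.ne'.isUnit hCx, lt_add_iff_pos_right]
  have hquad : 0 < d ⬝ᵥ (Ξ⁻¹ *ᵥ d) := by simpa using hΞ.inv.dotProduct_mulVec_pos hd
  linarith [mul_add_mul_abs_nonneg hα (C ⬝ᵥ d)]

/-- Windowed MAP estimate, middle regime: for `f x = ½(x−μ)ᵀΞ⁻¹(x−μ) + c·|Cx − y|` with `Ξ`
symmetric positive definite, `C ≠ 0` a row vector and `c > 0`, if
`Cμ − c·(CΞCᵀ) ≤ y ≤ Cμ + c·(CΞCᵀ)` then `x* = μ + ((y − Cμ)/(CΞCᵀ))·ΞCᵀ` is the unique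
global minimizer of `f`, and it satisfies `C x* = y`. -/
theorem map_estimate_middle_regime
    {n : ℕ} (Ξ : Matrix (Fin n) (Fin n) ℝ) (hΞ : Ξ.PosDef)
    (C : Fin n → ℝ) (hC : C ≠ 0) (μ : Fin n → ℝ) (y c : ℝ) (hc : 0 < c)
    (f : (Fin n → ℝ) → ℝ)
    (hf : ∀ x, f x = (1 / 2) * ((x - μ) ⬝ᵥ (Ξ⁻¹ *ᵥ (x - μ))) + c * |C ⬝ᵥ x - y|)
    (hy₁ : C ⬝ᵥ μ - c * (C ⬝ᵥ (Ξ *ᵥ C)) ≤ y) (hy₂ : y ≤ C ⬝ᵥ μ + c * (C ⬝ᵥ (Ξ *ᵥ C))) :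
    (∀ x : Fin n → ℝ, x ≠ μ + ((y - C ⬝ᵥ μ) / (C ⬝ᵥ (Ξ *ᵥ C))) • (Ξ *ᵥ C) →
      f (μ + ((y - C ⬝ᵥ μ) / (C ⬝ᵥ (Ξ *ᵥ C))) • (Ξ *ᵥ C)) < f x) ∧
    C ⬝ᵥ (μ + ((y - C ⬝ᵥ μ) / (C ⬝ᵥ (Ξ *ᵥ C))) • (Ξ *ᵥ C)) = y :=
  map_estimate_middle_regime_general Ξ hΞ C hC μ y c f hf hy₁ hy₂
end
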